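/- For φ ∈ ℝ with sin 2φ ≠ 0 and cos 2φ ≠ 0, set w₁ = (sin φ/√2, −sin φ/√2, −cos φ/√2, cos φ/√2), w₂ = (−1/2, −1/2, 1/2, 1/2) ∈ ℝ⁴, and α_{jk}(φ) = (w₁ʲ − w₁ᵏ)² + (w₂ʲ − w₂ᵏ)². Then with ρ_{jk}(φ) = 1/(qⱼ(φ) − qₖ(φ)): α₁₂ = 1/ρ₃₄², α₃₄ = 1/ρ₁₂², α₁₃ = α₂₄ = 1/ρ₁₄² + 1, and α₁₄ = α₂₃ = 1/ρ₁₃² + 1. -/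

import Mathlib

open Complex

/-- The collinear equal-mass four-body configuration with `θ = π/2`:
`q(φ) = (cos φ/√2, −cos φ/√2, sin φ/√2, −sin φ/√2)`. -/
noncomputable def qcfg (φ : ℝ) : Fin 4 → ℝ :=
  ![Real.cos φ / Real.sqrt 2, -(Real.cos φ) / Real.sqrt 2,
    Real.sin φ / Real.sqrt 2, -(Real.sin φ) / Real.sqrt 2]

/-- `ρ_{jk}(φ) = 1/(qⱼ(φ) − qₖ(φ))`. -/
noncomputable def ρ (φ : ℝ) (j k : Fin 4) : ℝ := 1 / (qcfg φ j - qcfg φ k)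

/-- `w₁ = (sin φ/√2, −sin φ/√2, −cos φ/√2, cos φ/√2)`. -/
noncomputable def w1 (φ : ℝ) : Fin 4 → ℝ :=
  ![Real.sin φ / Real.sqrt 2, -(Real.sin φ) / Real.sqrt 2,
    -(Real.cos φ) / Real.sqrt 2, Real.cos φ / Real.sqrt 2]

/-- `w₂ = (−1/2, −1/2, 1/2, 1/2)`. -/
noncomputable def w2 : Fin 4 → ℝ := ![-(1 / 2), -(1 / 2), 1 / 2, 1 / 2]

/-- `α_{jk}(φ) = (w₁ʲ − w₁ᵏ)² + (w₂ʲ − w₂ᵏ)²`. -/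
noncomputable def alph (φ : ℝ) (j k : Fin 4) : ℝ :=
  (w1 φ j - w1 φ k) ^ 2 + (w2 j - w2 k) ^ 2

/-!
Writing `q(φ) = (a, −a, b, −b)`, one has `w₁ = (b, −b, −a, a)`: `w₁` is `q` rotated by a
quarter turn in the `(a, b)`-plane. The term `(w₂ʲ − w₂ᵏ)²` vanishes inside the pairs
`{1, 2}`, `{3, 4}` and equals `1` across them, so each identity is a polynomial identity
in `a` and `b`.
-/

lemma one_div_ρ_sq (φ : ℝ) (j k : Fin 4) : 1 / ρ φ j k ^ 2 = (qcfg φ j - qcfg φ k) ^ 2 := by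
  rw [ρ, div_pow, one_pow, one_div_one_div]

lemma qcfg_eq (φ : ℝ) :
    qcfg φ = ![Real.cos φ / √2, -(Real.cos φ / √2), Real.sin φ / √2, -(Real.sin φ / √2)] := by
  simp only [qcfg, neg_div]

lemma w1_eq (φ : ℝ) :
    w1 φ = ![Real.sin φ / √2, -(Real.sin φ / √2), -(Real.cos φ / √2), Real.cos φ / √2] := by
  simp only [w1, neg_div]

theorem alpha_identities_general (φ : ℝ) :
    alph φ 0 1 = 1 / (ρ φ 2 3) ^ 2 ∧
    alph φ 2 3 = 1 / (ρ φ 0 1) ^ 2 ∧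
    alph φ 0 2 = 1 / (ρ φ 0 3) ^ 2 + 1 ∧
    alph φ 1 3 = 1 / (ρ φ 0 3) ^ 2 + 1 ∧
    alph φ 0 3 = 1 / (ρ φ 0 2) ^ 2 + 1 ∧
    alph φ 1 2 = 1 / (ρ φ 0 2) ^ 2 + 1 := by
  obtain ⟨a, b, hq, hw⟩ : ∃ a b : ℝ, qcfg φ = ![a, -a, b, -b] ∧ w1 φ = ![b, -b, -a, a] :=
    ⟨_, _, qcfg_eq φ, w1_eq φ⟩
  simp only [alph, one_div_ρ_sq, hq, hw, w2, Matrix.cons_val]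
  refine ⟨?_, ?_, ?_, ?_, ?_, ?_⟩ <;> ring

/-- The identities `α₁₂ = 1/ρ₃₄²`, `α₃₄ = 1/ρ₁₂²`, `α₁₃ = α₂₄ = 1/ρ₁₄² + 1` and
`α₁₄ = α₂₃ = 1/ρ₁₃² + 1`.  (Bodies are indexed `0,1,2,3`.) -/
theorem alpha_identities (φ : ℝ)
    (hs : Real.sin (2 * φ) ≠ 0) (hc : Real.cos (2 * φ) ≠ 0) :
    alph φ 0 1 = 1 / (ρ φ 2 3) ^ 2 ∧
    alph φ 2 3 = 1 / (ρ φ 0 1) ^ 2 ∧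
    alph φ 0 2 = 1 / (ρ φ 0 3) ^ 2 + 1 ∧
    alph φ 1 3 = 1 / (ρ φ 0 3) ^ 2 + 1 ∧
    alph φ 0 3 = 1 / (ρ φ 0 2) ^ 2 + 1 ∧
    alph φ 1 2 = 1 / (ρ φ 0 2) ^ 2 + 1 :=
  alpha_identities_general φ
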